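/- arXiv:1504.02991 — 2 statements merged into one kernel-verified Lean document; each statement's English description precedes it below -/
import Mathlib

section
/- For t = 1/20 and x ∈ (0.6044, 0.6554), applying the Choi map φ to the first tensor factor of the state ρ(x,t) yields a positive semidefinite operator (φ⊗I_3)(ρ(x,t)); i.e., the Choi map applied directly fails to detect the entanglement of ρ(x,t) in this parameter range. -/
/-!
`(φ ⊗ id)(ρ(x,t))` is real symmetric: its off-diagonal entries are `-K x / 2` at the six
positions of `x` and zero elsewhere, so it splits into a `3 × 3` block on the indices
`(0,0), (1,1), (2,2)` and three `2 × 2` blocks. After rescaling the basis by suitable positive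
weights the matrix becomes diagonally dominant, and Gershgorin's circle theorem makes its
eigenvalues nonnegative. For `t = 1/20` the `3 × 3` block is proportional to
`[[41/20, -x, -x], [-x, 11/10, -x], [-x, -x, 21/20]]`, which becomes singular at `x ≈ 0.65547`,
so the upper bound on `x` is essentially sharp.
-/

open Matrix
open scoped ComplexOrder


/-- Diagonal entries of the unnormalized state: in the paper's ordering
`(1+t, t, 1/t, 1/t, 1+t, t, 1, 1/t, 1)`. -/
noncomputable def diagEntry (t : ℝ) : Fin 3 × Fin 3 → ℝ
  | (0, 0) => 1 + t
  | (0, 1) => t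
  | (0, 2) => 1 / t
  | (1, 0) => 1 / t
  | (1, 1) => 1 + t
  | (1, 2) => t
  | (2, 0) => 1
  | (2, 1) => 1 / t
  | (2, 2) => 1

/-- The (upper) positions carrying the entry `x`, i.e. (1,5),(1,9),(5,9),(2,4),(3,7),(6,8)
in the 1-indexed `9 × 9` labelling with index `(i,k) ↦ 3i + k + 1`. -/
def xPos (p q : Fin 3 × Fin 3) : Prop :=
  (p = (0, 0) ∧ q = (1, 1)) ∨ (p = (0, 0) ∧ q = (2, 2)) ∨ (p = (1, 1) ∧ q = (2, 2)) ∨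
  (p = (0, 1) ∧ q = (1, 0)) ∨ (p = (0, 2) ∧ q = (2, 0)) ∨ (p = (1, 2) ∧ q = (2, 1))

instance : DecidableRel xPos := fun p q => by unfold xPos; infer_instance

/-- The two-parameter state `ρ(x,t)` of the paper, with normalization
`K = 1/(4 + 3/t + 4t)`. -/
noncomputable def rhoXT (x t : ℝ) : Matrix (Fin 3 × Fin 3) (Fin 3 × Fin 3) ℂ :=
  Matrix.of fun p q =>
    ((1 / (4 + 3 / t + 4 * t) : ℝ) : ℂ) *
      (if p = q then ((diagEntry t p : ℝ) : ℂ)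
       else if xPos p q ∨ xPos q p then (x : ℂ) else 0)

/-- The Choi map `φ` on 3×3 complex matrices. -/
noncomputable def choiPhi (a : Matrix (Fin 3) (Fin 3) ℂ) : Matrix (Fin 3) (Fin 3) ℂ :=
  (1 / 2 : ℂ) •
    !![a 0 0 + a 2 2, -a 0 1, -a 0 2;
       -a 1 0, a 1 1 + a 0 0, -a 1 2;
       -a 2 0, -a 2 1, a 2 2 + a 1 1]

/-- `φ ⊗ id`: apply `φ` to the first tensor factor of an operator on `ℂ^3 ⊗ ℂ^3`. -/
noncomputable def phiFst (ρ : Matrix (Fin 3 × Fin 3) (Fin 3 × Fin 3) ℂ) :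
    Matrix (Fin 3 × Fin 3) (Fin 3 × Fin 3) ℂ :=
  Matrix.of fun p q => choiPhi (Matrix.of fun i j => ρ (i, p.2) (j, q.2)) p.1 q.1

namespace Matrix

variable {n 𝕜 : Type*} [Fintype n] [DecidableEq n] [RCLike 𝕜]

theorem IsHermitian.posSemidef_of_sum_norm_le_re_diag {A : Matrix n n 𝕜} (hA : A.IsHermitian)
    (h : ∀ k, ∑ j ∈ Finset.univ.erase k, ‖A k j‖ ≤ RCLike.re (A k k)) : A.PosSemidef := by
  rw [hA.posSemidef_iff_eigenvalues_nonneg]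
  intro i
  have hμ : Module.End.HasEigenvalue (toLin' A) (hA.eigenvalues i : 𝕜) := by
    refine Module.End.hasEigenvalue_of_hasEigenvector (x := ⇑(hA.eigenvectorBasis i)) ⟨?_, ?_⟩
    · rw [Module.End.mem_eigenspace_iff, toLin'_apply, hA.mulVec_eigenvectorBasis,
        RCLike.real_smul_eq_coe_smul (K := 𝕜)]
    · simpa using hA.eigenvectorBasis.orthonormal.ne_zero i
  obtain ⟨k, hk⟩ := eigenvalue_mem_ball hμ
  rw [mem_closedBall_iff_norm] at hk
  have hre : RCLike.re (A k k) - hA.eigenvalues i ≤ ‖(hA.eigenvalues i : 𝕜) - A k k‖ := by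
    rw [← norm_neg, neg_sub]
    simpa using RCLike.re_le_norm (A k k - hA.eigenvalues i)
  simp only [Pi.zero_apply]
  linarith [h k]

/-- The hypothesis says that `diagonal w * A * diagonal w` is diagonally dominant. -/
theorem IsHermitian.posSemidef_of_weighted_sum_norm_le_re_diag {A : Matrix n n 𝕜}
    (hA : A.IsHermitian) {w : n → ℝ} (hw : ∀ k, 0 < w k)
    (h : ∀ k, ∑ j ∈ Finset.univ.erase k, w j * ‖A k j‖ ≤ w k * RCLike.re (A k k)) :
    A.PosSemidef := by
  set D : Matrix n n 𝕜 := diagonal fun k => (w k : 𝕜)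
  set D' : Matrix n n 𝕜 := diagonal fun k => ((w k)⁻¹ : 𝕜)
  have hD : Dᴴ = D := by simp [D, diagonal_conjTranspose]
  have hB : (D * A * D).IsHermitian := by
    rw [IsHermitian, conjTranspose_mul, conjTranspose_mul, hD, hA.eq, mul_assoc]
  have hBpsd : (D * A * D).PosSemidef := by
    refine hB.posSemidef_of_sum_norm_le_re_diag fun k => ?_
    have hentry : ∀ j, (D * A * D) k j = ((w k * w j : ℝ) : 𝕜) * A k j := fun j => by
      simp only [D, mul_diagonal, diagonal_mul, RCLike.ofReal_mul]
      ring
    simp only [hentry, norm_mul, RCLike.norm_ofReal, abs_of_pos (mul_pos (hw _) (hw _)),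
      RCLike.re_ofReal_mul, mul_assoc, ← Finset.mul_sum]
    exact mul_le_mul_of_nonneg_left (h k) (hw k).le
  have hA_eq : A = D'ᴴ * (D * A * D) * D' := by
    simp [D, D', diagonal_conjTranspose, ← mul_assoc, mul_assoc _ _ D', diagonal_mul_diagonal,
      (hw _).ne']
  rw [hA_eq]
  exact hBpsd.conjTranspose_mul_mul_same D'

end Matrix

theorem choiPhi_apply (a : Matrix (Fin 3) (Fin 3) ℂ) (i j : Fin 3) :
    choiPhi a i j = (if i = j then a i i + a (i - 1) (i - 1) else -a i j) / 2 := by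
  fin_cases i <;> fin_cases j <;>
    simp [choiPhi, div_eq_inv_mul, show (-1 : Fin 3) = 2 from rfl]

theorem fst_ne_of_xPos {p q : Fin 3 × Fin 3} (h : xPos p q) : p.1 ≠ q.1 := by
  rcases h with ⟨rfl, rfl⟩ | ⟨rfl, rfl⟩ | ⟨rfl, rfl⟩ | ⟨rfl, rfl⟩ | ⟨rfl, rfl⟩ | ⟨rfl, rfl⟩ <;>
    decide

noncomputable def phiRhoEntry (x t : ℝ) (p q : Fin 3 × Fin 3) : ℝ :=
  1 / (4 + 3 / t + 4 * t) / 2 *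
    (if p = q then diagEntry t p + diagEntry t (p.1 - 1, p.2)
     else if xPos p q ∨ xPos q p then -x else 0)

theorem phiFst_rhoXT (x t : ℝ) :
    phiFst (rhoXT x t) = of fun p q => ((phiRhoEntry x t p q : ℝ) : ℂ) := by
  ext ⟨i, k⟩ ⟨j, l⟩
  simp only [phiFst, rhoXT, phiRhoEntry, of_apply, choiPhi_apply]
  by_cases hij : i = j
  · subst hij
    by_cases hkl : k = l
    · subst hkl
      simp only [↓reduceIte]
      push_cast
      ring
    · have hnot : ∀ i', ¬ (xPos (i', k) (i', l) ∨ xPos (i', l) (i', k)) := fun i' h =>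
        h.elim (fun h => fst_ne_of_xPos h rfl) (fun h => fst_ne_of_xPos h rfl)
      simp [hkl, hnot]
  · simp only [hij, Prod.mk.injEq, false_and, ↓reduceIte]
    split_ifs <;> push_cast <;> ring

theorem phiRhoEntry_comm (x t : ℝ) (p q : Fin 3 × Fin 3) :
    phiRhoEntry x t p q = phiRhoEntry x t q p := by
  by_cases h : p = q
  · rw [h]
  · simp only [phiRhoEntry, h, Ne.symm h, ↓reduceIte, or_comm]

theorem isHermitian_phiFst_rhoXT (x t : ℝ) : (phiFst (rhoXT x t)).IsHermitian := by
  rw [phiFst_rhoXT]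
  ext p q
  simp [phiRhoEntry_comm x t p q]

/-- Close to the kernel vector `(133, 204.97…, 210.98…)` of the `3 × 3` block at the critical
`x ≈ 0.65547`, which is what makes the weighted dominance hold up to `x = 0.6554`. -/
def choiWeight : Fin 3 × Fin 3 → ℝ
  | (0, 0) => 133
  | (1, 1) => 205
  | (2, 2) => 211
  | _ => 1

theorem choiWeight_pos (p : Fin 3 × Fin 3) : 0 < choiWeight p := by
  unfold choiWeight; split <;> norm_num

theorem phiRhoEntry_weighted_dominant {x : ℝ} (hx0 : 0 ≤ x) (hx : x < 0.6554)
    (k : Fin 3 × Fin 3) :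
    ∑ j ∈ Finset.univ.erase k, choiWeight j * |phiRhoEntry x (1/20) k j| ≤
      choiWeight k * phiRhoEntry x (1/20) k k := by
  rw [Finset.sum_erase_eq_sub (Finset.mem_univ k)]
  fin_cases k <;>
    simp [Fintype.sum_prod_type, Fin.sum_univ_three, phiRhoEntry, xPos, diagEntry, choiWeight,
      show (-1 : Fin 3) = 2 from rfl] <;>
    norm_num [abs_of_nonneg hx0] <;> linarith

/-- for `t = 1/20` and `x ∈ (0.6044, 0.6554)`, the Choi map `φ`
applied directly to the first factor of `ρ(x,t)` yields a positive semidefinite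
operator, i.e. it fails to detect the entanglement in this range. -/
theorem rhoXT_not_detected (x : ℝ) (hx1 : 0.6044 < x) (hx2 : x < 0.6554) :
    (phiFst (rhoXT x (1/20))).PosSemidef := by
  refine (isHermitian_phiFst_rhoXT x (1/20)).posSemidef_of_weighted_sum_norm_le_re_diag
    choiWeight_pos fun k => ?_
  rw [phiFst_rhoXT]
  simpa [Complex.norm_real] using phiRhoEntry_weighted_dominant (by linarith) hx2 k
end

section
/- For t = 1/20 and x = 0.63, with L₃ = diag(1, 5/8, 5/8), the filtered state ρ^f = (L₃⊗I₃) ρ(x,t) (L₃⊗I₃)† satisfies: (φ⊗I_3)(ρ^f) has a negative eigenvalue. Hence the local filter makes the entanglement of ρ(x,t) detectable by the Choi map φ. -/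
/-!
Since `ρ(x,t)` is Hermitian and `φ` commutes with `ᴴ`, the matrix `M = (φ ⊗ id)(ρᶠ)` is
Hermitian, so it has a negative eigenvalue as soon as it is not positive semidefinite. Its
compression to `span {e₀ ⊗ e₀, e₁ ⊗ e₁, e₂ ⊗ e₂}` is an explicit rational `3 × 3` matrix whose
quadratic form is negative at `(1, 2, 2)`; as compressions of positive semidefinite matrices are
positive semidefinite, `M` is not.
-/

open Matrix
open scoped Kronecker ComplexOrder


/-- The local filter `L₃ = diag(1, 5/8, 5/8)`. -/
noncomputable def L3 : Matrix (Fin 3) (Fin 3) ℂ :=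
  Matrix.diagonal ![1, 5/8, 5/8]

lemma rhoXT_isHermitian (x t : ℝ) : (rhoXT x t).IsHermitian := by
  ext p q
  by_cases hpq : p = q
  · subst hpq
    simp [rhoXT]
  · simp [rhoXT, hpq, Ne.symm hpq, or_comm, apply_ite (starRingEnd ℂ), map_ofNat]

lemma choiPhi_conjTranspose (a : Matrix (Fin 3) (Fin 3) ℂ) : choiPhi aᴴ = (choiPhi a)ᴴ := by
  ext i j
  fin_cases i <;> fin_cases j <;> simp [choiPhi]

lemma phiFst_isHermitian {ρ : Matrix (Fin 3 × Fin 3) (Fin 3 × Fin 3) ℂ} (hρ : ρ.IsHermitian) :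
    (phiFst ρ).IsHermitian := by
  ext p q
  have hblock : (of fun i j => ρ (i, p.2) (j, q.2)) = (of fun i j => ρ (i, q.2) (j, p.2))ᴴ := by
    ext i j
    exact (hρ.apply (i, p.2) (j, q.2)).symm
  change star (choiPhi (of fun i j => ρ (i, q.2) (j, p.2)) q.1 p.1) = choiPhi _ p.1 q.1
  rw [hblock, choiPhi_conjTranspose]
  rfl

lemma Matrix.IsHermitian.exists_eigenvalues_neg_of_not_posSemidef {n 𝕜 : Type*} [Fintype n]
    [DecidableEq n] [RCLike 𝕜] {A : Matrix n n 𝕜} (hA : A.IsHermitian) (h : ¬ A.PosSemidef) :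
    ∃ i, hA.eigenvalues i < 0 := by
  contrapose! h
  exact hA.posSemidef_iff_eigenvalues_nonneg.mpr h

lemma L3_kronecker_one :
    L3 ⊗ₖ (1 : Matrix (Fin 3) (Fin 3) ℂ) = diagonal fun p => ![1, 5/8, 5/8] p.1 := by
  rw [L3, ← diagonal_one, diagonal_kronecker_diagonal]
  simp

local notation "ρᶠ" => (L3 ⊗ₖ (1 : Matrix (Fin 3) (Fin 3) ℂ)) * rhoXT 0.63 (1/20) * (L3 ⊗ₖ (1 : Matrix (Fin 3) (Fin 3) ℂ))ᴴ

lemma phiFst_filtered_submatrix_diag :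
    (phiFst ρᶠ).submatrix (fun i => (i, i)) (fun i => (i, i)) =
      (1 / 164352 : ℂ) • !![1844, -504, -504; -504, 589, -315; -504, -315, 525] := by
  rw [L3_kronecker_one]
  ext i j
  fin_cases i <;> fin_cases j <;>
    simp [phiFst, choiPhi, rhoXT, xPos, diagEntry, diagonal_conjTranspose] <;>
    norm_num [Complex.ext_iff, map_ofNat, Complex.div_re, Complex.div_im, Complex.normSq_apply]

lemma not_posSemidef_phiFst_filtered_submatrix_diag :
    ¬ ((phiFst ρᶠ).submatrix (fun i => (i, i)) (fun i => (i, i))).PosSemidef := by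
  rw [phiFst_filtered_submatrix_diag]
  intro h
  have hform := h.dotProduct_mulVec_nonneg ![1, 2, 2]
  simp [dotProduct, mulVec, Fin.sum_univ_three, Complex.le_def] at hform
  norm_num at hform

/-- for `t = 1/20` and `x = 0.63`, the filtered state
`ρᶠ = (L₃ ⊗ I₃) ρ(x,t) (L₃ ⊗ I₃)†` satisfies: `(φ ⊗ I₃)(ρᶠ)` has a negative
eigenvalue, so the local filter makes the entanglement detectable by `φ`. -/
theorem filtered_rhoXT_detected :
    ∃ (h : (phiFst ((L3 ⊗ₖ (1 : Matrix (Fin 3) (Fin 3) ℂ)) * rhoXT 0.63 (1/20) *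
        (L3 ⊗ₖ (1 : Matrix (Fin 3) (Fin 3) ℂ))ᴴ)).IsHermitian) (i : Fin 3 × Fin 3),
      h.eigenvalues i < 0 := by
  have hM : (phiFst ρᶠ).IsHermitian :=
    phiFst_isHermitian (isHermitian_mul_mul_conjTranspose _ (rhoXT_isHermitian _ _))
  refine ⟨hM, hM.exists_eigenvalues_neg_of_not_posSemidef fun hpsd => ?_⟩
  exact not_posSemidef_phiFst_filtered_submatrix_diag (hpsd.submatrix _)
end
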